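/- Let C be a triangulated category equipped with a bounded weight structure w and with a bounded t-structure t satisfying the transversality properties (a)–(d). Then C is pseudo-abelian: every idempotent endomorphism of every object of C splits. (Corollary following Corollary 1.Ca) -/

import Mathlib

open CategoryTheory Limits Pretriangulated ZeroObject

namespace Absolute

universe v u

/-- The radical of a preadditive category: `α : M ⟶ N` belongs to the radical if and only if
for every `β : N ⟶ M`, the endomorphism `𝟙 M - β ∘ α` of `M` is an isomorphism. -/
def radical {C : Type u} [Category.{v} C] [Preadditive C] (M N : C) : Set (M ⟶ N) :=
  {α | ∀ β : N ⟶ M, IsIso (𝟙 M - α ≫ β)}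

/-- Full subcategories of preadditive categories are preadditive. -/
instance fullSubcategoryPreadditive {C : Type u} [Category.{v} C] [Preadditive C]
    (Z : C → Prop) : Preadditive (ObjectProperty.FullSubcategory Z) where
  homGroup X Y := InducedCategory.homEquiv.addCommGroup
  add_comp _ _ _ f f' g := by ext; exact Preadditive.add_comp _ _ _ f.hom f'.hom g.hom
  comp_add _ _ _ f g g' := by ext; exact Preadditive.comp_add _ _ _ f.hom g.hom g'.hom

/-- The property that morphisms `f : A ⟶ M` and `g : M ⟶ B` between objects satisfying `Z`
form a short exact sequence `0 ⟶ A ⟶ M ⟶ B ⟶ 0` in the full subcategory of objects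
satisfying `Z`. -/
def IsShortExactInSub {C : Type u} [Category.{v} C] [Preadditive C] (Z : C → Prop)
    {A M B : C} (hA : Z A) (hM : Z M) (hB : Z B) (f : A ⟶ M) (g : M ⟶ B) : Prop :=
  let A' : ObjectProperty.FullSubcategory Z := ⟨A, hA⟩
  let M' : ObjectProperty.FullSubcategory Z := ⟨M, hM⟩
  let B' : ObjectProperty.FullSubcategory Z := ⟨B, hB⟩
  let f' : A' ⟶ M' := ObjectProperty.homMk f
  let g' : M' ⟶ B' := ObjectProperty.homMk g
  Mono f' ∧ Epi g' ∧ ∃ w : f' ≫ g' = 0, (ShortComplex.mk f' g' w).Exact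

variable (C : Type u) [Category.{v} C] [Preadditive C] [HasZeroObject C]
  [HasShift C ℤ] [∀ n : ℤ, (shiftFunctor C n).Additive] [Pretriangulated C]

/-- A bounded weight structure `w` on a triangulated category `C`, given by the classes
`wle n = C_{w ≤ n}` and `wge n = C_{w ≥ n}`. -/
structure BoundedWeightStructure where
  wle : ℤ → Set C
  wge : ℤ → Set C
  wle_iso : ∀ (n : ℤ) ⦃X Y : C⦄, (X ≅ Y) → X ∈ wle n → Y ∈ wle n
  wge_iso : ∀ (n : ℤ) ⦃X Y : C⦄, (X ≅ Y) → X ∈ wge n → Y ∈ wge n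
  wle_summand : ∀ (n : ℤ) ⦃X Y : C⦄ (i : X ⟶ Y) (r : Y ⟶ X),
    i ≫ r = 𝟙 X → Y ∈ wle n → X ∈ wle n
  wge_summand : ∀ (n : ℤ) ⦃X Y : C⦄ (i : X ⟶ Y) (r : Y ⟶ X),
    i ≫ r = 𝟙 X → Y ∈ wge n → X ∈ wge n
  wle_zero : (0 : C) ∈ wle 0
  wge_zero : (0 : C) ∈ wge 0
  /-- `C_{w ≤ n} := C_{w ≤ 0}[n]` -/
  wle_shift : ∀ (n k : ℤ) (X : C), X ∈ wle n ↔ X⟦k⟧ ∈ wle (n + k)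
  wge_shift : ∀ (n k : ℤ) (X : C), X ∈ wge n ↔ X⟦k⟧ ∈ wge (n + k)
  wle_mono : ∀ n : ℤ, wle n ⊆ wle (n + 1)
  wge_anti : ∀ n : ℤ, wge (n + 1) ⊆ wge n
  w_orth : ∀ ⦃X Y : C⦄, X ∈ wle 0 → Y ∈ wge 1 → ∀ f : X ⟶ Y, f = 0
  w_dec : ∀ M : C, ∃ (A B : C) (f : A ⟶ M) (g : M ⟶ B) (h : B ⟶ A⟦(1 : ℤ)⟧),
    Triangle.mk f g h ∈ (distTriang C) ∧ A ∈ wle 0 ∧ B ∈ wge 1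
  w_bounded : ∀ M : C, ∃ m n : ℤ, M ∈ wge m ∧ M ∈ wle n

/-- The heart `C_{w = n}` of a (bounded) weight structure. -/
def BoundedWeightStructure.wEq (w : BoundedWeightStructure C) (n : ℤ) : Set C :=
  w.wle n ∩ w.wge n

/-- A bounded t-structure `t` on a triangulated category `C`, given by the classes
`tle n = C^{t ≤ n}` and `tge n = C^{t ≥ n}`, together with its truncation functors and
the associated cohomology functors `H m` with values in the heart `C^{t = 0}`. -/
structure BoundedTStructure where
  tle : ℤ → Set C
  tge : ℤ → Set C
  tle_iso : ∀ (n : ℤ) ⦃X Y : C⦄, (X ≅ Y) → X ∈ tle n → Y ∈ tle n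
  tge_iso : ∀ (n : ℤ) ⦃X Y : C⦄, (X ≅ Y) → X ∈ tge n → Y ∈ tge n
  /-- `C^{t ≤ n} := C^{t ≤ 0}[-n]`, i.e. the cohomological indexing convention -/
  tle_shift : ∀ (n k : ℤ) (X : C), X ∈ tle n ↔ X⟦k⟧ ∈ tle (n - k)
  tge_shift : ∀ (n k : ℤ) (X : C), X ∈ tge n ↔ X⟦k⟧ ∈ tge (n - k)
  tle_mono : ∀ n : ℤ, tle n ⊆ tle (n + 1)
  tge_anti : ∀ n : ℤ, tge (n + 1) ⊆ tge n
  t_orth : ∀ ⦃X Y : C⦄, X ∈ tle 0 → Y ∈ tge 1 → ∀ f : X ⟶ Y, f = 0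
  t_bounded : ∀ M : C, ∃ m n : ℤ, M ∈ tge m ∧ M ∈ tle n
  /-- truncation functor `τ^{t ≤ m}` -/
  τle : ℤ → C ⥤ C
  /-- truncation functor `τ^{t ≥ m}` -/
  τge : ℤ → C ⥤ C
  τle_mem : ∀ (m : ℤ) (X : C), (τle m).obj X ∈ tle m
  τge_mem : ∀ (m : ℤ) (X : C), (τge m).obj X ∈ tge m
  τleε : ∀ m : ℤ, τle m ⟶ 𝟭 C
  τgeη : ∀ m : ℤ, 𝟭 C ⟶ τge m
  τ_triangle : ∀ (m : ℤ) (X : C), ∃ h : (τge (m + 1)).obj X ⟶ ((τle m).obj X)⟦(1 : ℤ)⟧,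
    Triangle.mk ((τleε m).app X) ((τgeη (m + 1)).app X) h ∈ distTriang C
  /-- the cohomology functors `H^m : C ⥤ C^{t = 0}`, viewed as endofunctors of `C` with
  values in the heart -/
  H : ℤ → C ⥤ C
  H_additive : ∀ m : ℤ, (H m).Additive
  H_heart : ∀ (m : ℤ) (X : C), (H m).obj X ∈ tle 0 ∧ (H m).obj X ∈ tge 0
  H_shift : ∀ m : ℤ, Nonempty (shiftFunctor C (1 : ℤ) ⋙ H m ≅ H (m + 1))
  H_heart_id : ∀ X : C, X ∈ tle 0 → X ∈ tge 0 → Nonempty ((H 0).obj X ≅ X)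
  H_vanish_le : ∀ (m n : ℤ) (X : C), X ∈ tle n → n < m → IsZero ((H m).obj X)
  H_vanish_ge : ∀ (m n : ℤ) (X : C), X ∈ tge n → m < n → IsZero ((H m).obj X)
  /-- the family of cohomology functors associated to a bounded t-structure is conservative -/
  H_conservative : ∀ ⦃X Y : C⦄ (f : X ⟶ Y), (∀ m : ℤ, IsIso ((H m).map f)) → IsIso f

/-- The intersection `C^{t = m} = C^{t ≤ m} ∩ C^{t ≥ m}`. -/
def BoundedTStructure.tEq (t : BoundedTStructure C) (m : ℤ) : Set C :=
  t.tle m ∩ t.tge m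

variable [HasFiniteBiproducts C]

/-- A bounded weight structure and a bounded t-structure on `C` satisfying the
transversality properties (a)–(d). -/
structure TransversalPackage extends BoundedWeightStructure C, BoundedTStructure C where
  /-- (a): each `C_{w = n}^{t = m}` is abelian ... -/
  wt_abelian : ∀ (n m : ℤ),
    Abelian (ObjectProperty.FullSubcategory (fun X : C => (X ∈ wle n ∧ X ∈ wge n) ∧ (X ∈ tle m ∧ X ∈ tge m)))
  /-- (a): ... and semisimple (every monomorphism splits) ... -/
  wt_semisimple : ∀ (n m : ℤ)
    ⦃X Y : ObjectProperty.FullSubcategory (fun X : C => (X ∈ wle n ∧ X ∈ wge n) ∧ (X ∈ tle m ∧ X ∈ tge m))⦄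
    (f : X ⟶ Y), Mono f → ∃ r : Y ⟶ X, f ≫ r = 𝟙 X
  /-- (a): ... and every object of `C_{w = 0}` is isomorphic to a finite direct sum of
  objects of the categories `C_{w = 0}^{t = m}`, `m ∈ ℤ` -/
  wheart_sum : ∀ X : C, X ∈ wle 0 → X ∈ wge 0 →
    ∃ (k : ℕ) (Y : Fin k → C) (m : Fin k → ℤ),
      (∀ i, (Y i ∈ wle 0 ∧ Y i ∈ wge 0) ∧ (Y i ∈ tle (m i) ∧ Y i ∈ tge (m i))) ∧
      Nonempty (X ≅ ⨁ Y)
  /-- (b): for fixed `m` and `n₁ ≠ n₂`, every morphism from an object of `C_{w = n₁}^{t = m}`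
  to an object of `C_{w = n₂}^{t = m}` is zero -/
  wt_hom_vanish : ∀ (m n₁ n₂ : ℤ), n₁ ≠ n₂ → ∀ ⦃X Y : C⦄,
    X ∈ wle n₁ → X ∈ wge n₁ → X ∈ tle m → X ∈ tge m →
    Y ∈ wle n₂ → Y ∈ wge n₂ → Y ∈ tle m → Y ∈ tge m → ∀ f : X ⟶ Y, f = 0
  /-- (c): every object of `C^{t = m}` admits weight filtrations concentrated at any `n`,
  with outer terms in `C^{t = m}`, which are short exact sequences in `C^{t = m}` -/
  t_weight_filtration : ∀ (m n : ℤ) (M : C) (hM : M ∈ tle m ∧ M ∈ tge m),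
    ∃ (A B : C) (hA : A ∈ tle m ∧ A ∈ tge m) (hB : B ∈ tle m ∧ B ∈ tge m)
      (f : A ⟶ M) (g : M ⟶ B) (δ : B ⟶ A⟦(1 : ℤ)⟧),
      Triangle.mk f g δ ∈ (distTriang C) ∧ A ∈ wle (n - 1) ∧ B ∈ wge n ∧
      IsShortExactInSub (fun X : C => X ∈ tle m ∧ X ∈ tge m) hA hM hB f g
  /-- (d): the truncation functors preserve `C_{w ≤ n}` and `C_{w ≥ n}` -/
  τle_wle : ∀ (m n : ℤ) (X : C), X ∈ wle n → (τle m).obj X ∈ wle n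
  τle_wge : ∀ (m n : ℤ) (X : C), X ∈ wge n → (τle m).obj X ∈ wge n
  τge_wle : ∀ (m n : ℤ) (X : C), X ∈ wle n → (τge m).obj X ∈ wle n
  τge_wge : ∀ (m n : ℤ) (X : C), X ∈ wge n → (τge m).obj X ∈ wge n

/-
Idempotents split in abelian categories, hence, by transversality (a), on every object of
`C_{w=n}^{t=m}`. Splitting propagates along a distinguished triangle `A ⟶ M ⟶ B ⟶ A⟦1⟧` with
`Hom(A, B) = Hom(A, B⟦-1⟧) = Hom(A⟦1⟧, B) = 0`: an idempotent `e` of `M` induces idempotents of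
`A` and `B`, their splittings cut out a triangle `A₀ ⟶ M₀ ⟶ B₀ ⟶ A₀⟦1⟧` whose middle term is the
image of an idempotent `e'` of `M` agreeing with `e` on `A` and modulo `B`; then `(e - e')² = 0`,
so `e` and `e'` are conjugate and `e` splits as well. The weight filtrations of (c) build every
object of `C^{t=m}` out of objects of the `C_{w=n}^{t=m}` by such extensions, and the
t-truncation triangles build every object of `C` out of objects of the `C^{t=m}`.
-/

theorem IsIdempotentElem.exists_units_mul_eq_mul_of_sub_mul_self_eq_zero {R : Type*} [Ring R]
    {e f : R} (he : IsIdempotentElem e) (hf : IsIdempotentElem f)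
    (h : (e - f) * (e - f) = 0) : ∃ u : Rˣ, e * u = u * f := by
  -- `ef + (1 - e)(1 - f)` intertwines any two idempotents, and is a unit once `(e - f)² = 0`
  have key : ∀ {a b : R}, IsIdempotentElem a → IsIdempotentElem b →
      (a * b + (1 - a) * (1 - b)) * (b * a + (1 - b) * (1 - a)) = 1 - (a - b) * (a - b) := by
    intro a b ha hb
    simp only [mul_add, add_mul, mul_sub, sub_mul, mul_one, one_mul, ← mul_assoc, ha.eq, hb.eq,
      hb.mul_mul_self]
    abel
  refine ⟨⟨e * f + (1 - e) * (1 - f), f * e + (1 - f) * (1 - e), ?_, ?_⟩, ?_⟩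
  · rw [key he hf, h, sub_zero]
  · rw [key hf he, ← neg_sub e f, neg_mul_neg, h, sub_zero]
  · simp only [mul_add, add_mul, mul_sub, sub_mul, mul_one, one_mul, ← mul_assoc, he.eq, hf.eq,
      hf.mul_mul_self]
    abel

section

variable {C : Type*} [Category* C]

def IsSplitIdempotent {X : C} (p : X ⟶ X) : Prop :=
  ∃ (Y : C) (i : Y ⟶ X) (e : X ⟶ Y), i ≫ e = 𝟙 Y ∧ e ≫ i = p

variable (C) in
def idempotentsSplit : ObjectProperty C :=
  fun X => ∀ p : X ⟶ X, p ≫ p = p → IsSplitIdempotent p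

lemma IsSplitIdempotent.idem {X : C} {p : X ⟶ X} (hp : IsSplitIdempotent p) : p ≫ p = p := by
  obtain ⟨Y, i, e, hie, rfl⟩ := hp
  simp [reassoc_of% hie]

lemma IsSplitIdempotent.map {D : Type*} [Category* D] (F : C ⥤ D) {X : C} {p : X ⟶ X}
    (hp : IsSplitIdempotent p) : IsSplitIdempotent (F.map p) := by
  obtain ⟨Y, i, e, hie, rfl⟩ := hp
  exact ⟨F.obj Y, F.map i, F.map e, by rw [← F.map_comp, hie, F.map_id], (F.map_comp e i).symm⟩

lemma idempotentsSplit_of_isIdempotentComplete (Z : ObjectProperty C)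
    [IsIdempotentComplete Z.FullSubcategory] {X : C} (hX : Z X) : idempotentsSplit C X :=
  fun p hp => by
    obtain ⟨Y, i, e, hie, hei⟩ := IsIdempotentComplete.idempotents_split
      (⟨X, hX⟩ : Z.FullSubcategory) (ObjectProperty.homMk p) (InducedCategory.hom_ext hp)
    exact IsSplitIdempotent.map Z.ι ⟨Y, i, e, hie, hei⟩

variable [Preadditive C] [HasZeroObject C] [HasShift C ℤ] [∀ n : ℤ, (shiftFunctor C n).Additive]
  [Pretriangulated C]

namespace Triangle

variable {T : Triangle C} (hT : T ∈ distTriang C)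
include hT

lemma comp_self_eq_zero_of_mor₁_comp_of_comp_mor₂ {d : T.obj₂ ⟶ T.obj₂}
    (h₁ : T.mor₁ ≫ d = 0) (h₂ : d ≫ T.mor₂ = 0) : d ≫ d = 0 := by
  obtain ⟨x, hx⟩ := Triangle.coyoneda_exact₂ T hT d h₂
  obtain ⟨y, hy⟩ := Triangle.yoneda_exact₂ T hT d h₁
  calc d ≫ d = x ≫ (T.mor₁ ≫ T.mor₂) ≫ y := by
        nth_rw 1 [hx]; rw [hy]; simp only [Category.assoc]
    _ = 0 := by rw [comp_distTriang_mor_zero₁₂ _ hT, zero_comp, comp_zero]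

lemma exists_isSplitIdempotent_comm (E : T ⟶ T) (h₁ : IsSplitIdempotent E.hom₁)
    (h₃ : IsSplitIdempotent E.hom₃) :
    ∃ e : T.obj₂ ⟶ T.obj₂, IsSplitIdempotent e ∧
      T.mor₁ ≫ e = E.hom₁ ≫ T.mor₁ ∧ e ≫ T.mor₂ = T.mor₂ ≫ E.hom₃ := by
  obtain ⟨A₀, iA, qA, hA, hA'⟩ := h₁
  obtain ⟨B₀, iB, qB, hB, hB'⟩ := h₃
  have hE₃ : T.mor₃ ≫ (qA ≫ iA)⟦(1 : ℤ)⟧' = qB ≫ iB ≫ T.mor₃ := by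
    rw [hA', E.comm₃, ← hB', Category.assoc]
  obtain ⟨M₀, f₀, g₀, hT₀⟩ := distinguished_cocone_triangle₂ (iB ≫ T.mor₃ ≫ qA⟦(1 : ℤ)⟧')
  have hφ₃ : (iB ≫ T.mor₃ ≫ qA⟦(1 : ℤ)⟧') ≫ iA⟦(1 : ℤ)⟧' = iB ≫ T.mor₃ := by
    rw [Category.assoc, Category.assoc, ← Functor.map_comp, hE₃, reassoc_of% hB]
  have hψ₃ : T.mor₃ ≫ qA⟦(1 : ℤ)⟧' = qB ≫ iB ≫ T.mor₃ ≫ qA⟦(1 : ℤ)⟧' := by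
    rw [← reassoc_of% hE₃, ← Functor.map_comp, Category.assoc, hA, Category.comp_id]
  obtain ⟨φ, hφ₁, hφ₂⟩ : ∃ φ : M₀ ⟶ T.obj₂, f₀ ≫ φ = iA ≫ T.mor₁ ∧ g₀ ≫ iB = φ ≫ T.mor₂ :=
    complete_distinguished_triangle_morphism₂ _ T hT₀ hT iA iB hφ₃
  obtain ⟨ψ, hψ₁, hψ₂⟩ : ∃ ψ : T.obj₂ ⟶ M₀, T.mor₁ ≫ ψ = qA ≫ f₀ ∧ T.mor₂ ≫ qB = ψ ≫ g₀ :=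
    complete_distinguished_triangle_morphism₂ T _ hT hT₀ qA qB hψ₃
  -- the five lemma, applied to `(iA ≫ qA, φ ≫ ψ, iB ≫ qB) = (𝟙, φ ≫ ψ, 𝟙)`
  have : IsIso (φ ≫ ψ) := by
    refine isIso₂_of_isIso₁₃ (Triangle.homMk (Triangle.mk f₀ g₀ _) T iA φ iB hφ₁ hφ₂ hφ₃ ≫
      Triangle.homMk T (Triangle.mk f₀ g₀ _) qA ψ qB hψ₁ hψ₂ hψ₃) hT₀ hT₀ ?_ ?_
    · exact (hA ▸ inferInstance : IsIso (iA ≫ qA))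
    · exact (hB ▸ inferInstance : IsIso (iB ≫ qB))
  have hf₀ : f₀ ≫ inv (φ ≫ ψ) = f₀ := by
    rw [IsIso.comp_inv_eq, reassoc_of% hφ₁, hψ₁, reassoc_of% hA]
  have hg₀ : inv (φ ≫ ψ) ≫ g₀ = g₀ := by
    rw [IsIso.inv_comp_eq, Category.assoc, ← hψ₂, ← reassoc_of% hφ₂, hB, Category.comp_id]
  refine ⟨ψ ≫ inv (φ ≫ ψ) ≫ φ, ⟨M₀, inv (φ ≫ ψ) ≫ φ, ψ, by simp, rfl⟩, ?_, ?_⟩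
  · rw [reassoc_of% hψ₁, reassoc_of% hf₀, hφ₁, ← hA', Category.assoc]
  · rw [Category.assoc, Category.assoc, ← hφ₂, reassoc_of% hg₀, ← reassoc_of% hψ₂, hB']

lemma isSplitIdempotent_hom₂ (E : T ⟶ T) (hE : E.hom₂ ≫ E.hom₂ = E.hom₂)
    (h₁ : IsSplitIdempotent E.hom₁) (h₃ : IsSplitIdempotent E.hom₃) :
    IsSplitIdempotent E.hom₂ := by
  obtain ⟨e, he, he₁, he₃⟩ := exists_isSplitIdempotent_comm hT E h₁ h₃
  have hsq : (E.hom₂ - e) ≫ (E.hom₂ - e) = 0 :=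
    comp_self_eq_zero_of_mor₁_comp_of_comp_mor₂ hT
      (by rw [Preadditive.comp_sub, E.comm₁, he₁, sub_self])
      (by rw [Preadditive.sub_comp, ← E.comm₂, he₃, sub_self])
  obtain ⟨u, hu⟩ := IsIdempotentElem.exists_units_mul_eq_mul_of_sub_mul_self_eq_zero
    (R := End T.obj₂) hE he.idem hsq
  exact Idempotents.split_imp_of_iso (Aut.unitsEndEquivAut _ u) e E.hom₂ hu.symm he

lemma idempotentsSplit_obj₂ (h₁ : idempotentsSplit C T.obj₁) (h₃ : idempotentsSplit C T.obj₃)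
    (h₁₃ : ∀ f : T.obj₁ ⟶ T.obj₃, f = 0) (h₁₃' : ∀ f : T.obj₁ ⟶ T.obj₃⟦(-1 : ℤ)⟧, f = 0)
    (h₁₃'' : ∀ f : T.obj₁⟦(1 : ℤ)⟧ ⟶ T.obj₃, f = 0) : idempotentsSplit C T.obj₂ := by
  intro e he
  obtain ⟨a, ha⟩ := Triangle.coyoneda_exact₂ T hT (T.mor₁ ≫ e) (h₁₃ _)
  obtain ⟨b, hb₂, hb₃⟩ := complete_distinguished_triangle_morphism T T hT hT a e ha
  refine isSplitIdempotent_hom₂ hT (Triangle.homMk T T a e b ha hb₂ hb₃) he (h₁ a ?_) (h₃ b ?_)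
  · obtain ⟨g, hg⟩ : ∃ g : T.obj₁ ⟶ T.obj₃⟦(-1 : ℤ)⟧, a ≫ a - a = g ≫ T.invRotate.mor₁ :=
      Triangle.coyoneda_exact₂ _ (inv_rot_of_distTriang T hT) (a ≫ a - a) (by
        change (a ≫ a - a) ≫ T.mor₁ = 0
        rw [Preadditive.sub_comp, Category.assoc, ← ha, ← Category.assoc, ← ha, Category.assoc, he,
          sub_self])
    rw [← sub_eq_zero, hg, h₁₃' g]
    exact zero_comp
  · obtain ⟨g, hg⟩ := Triangle.yoneda_exact₃ T hT (b ≫ b - b) (by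
      rw [Preadditive.comp_sub, reassoc_of% hb₂, hb₂, reassoc_of% he, sub_self])
    rw [← sub_eq_zero, hg, h₁₃'' g, comp_zero]

end Triangle

lemma idempotentsSplit_of_isGE_of_isLE (t : Triangulated.TStructure C)
    (hheart : ∀ (m : ℤ) (X : C) [t.IsLE X m] [t.IsGE X m], idempotentsSplit C X)
    (a b : ℤ) (X : C) [t.IsGE X a] [t.IsLE X b] : idempotentsSplit C X := by
  suffices h : ∀ b, a ≤ b → ∀ (X : C) [t.IsGE X a] [t.IsLE X b], idempotentsSplit C X by
    have := t.isLE_of_le X b (max a b) (le_max_right a b)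
    exact h (max a b) (le_max_left a b) X
  intro b hab
  induction b, hab using Int.leInduction with
  | base => exact fun X _ _ => hheart a X
  | succ b _ ih =>
    intro X _ _
    have hT := t.triangleLTGE_distinguished (b + 1) X
    have := t.isGE_shift ((t.truncGE (b + 1)).obj X) (b + 1) (-1) (b + 2)
    have := t.isLE_shift ((t.truncLT (b + 1)).obj X) b 1 (b - 1)
    have : t.IsGE ((t.truncLT (b + 1)).obj X) a := by
      have := t.isGE_of_ge ((t.truncGE (b + 1)).obj X⟦(-1 : ℤ)⟧) a (b + 2)
      exact t.isGE₂ _ (inv_rot_of_distTriang _ hT) a this (inferInstanceAs (t.IsGE X a))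
    have : t.IsLE ((t.truncGE (b + 1)).obj X) (b + 1) := by
      have := t.isLE_of_le ((t.truncLT (b + 1)).obj X⟦(1 : ℤ)⟧) (b - 1) (b + 1)
      exact t.isLE₂ _ (rot_of_distTriang _ hT) (b + 1) (inferInstanceAs (t.IsLE X (b + 1))) this
    exact Triangle.idempotentsSplit_obj₂ hT
      (ih ((t.truncLT (b + 1)).obj X)) (hheart (b + 1) ((t.truncGE (b + 1)).obj X))
      (fun (f : (t.truncLT (b + 1)).obj X ⟶ (t.truncGE (b + 1)).obj X) => t.zero f b (b + 1))
      (fun (f : (t.truncLT (b + 1)).obj X ⟶ (t.truncGE (b + 1)).obj X⟦(-1 : ℤ)⟧) =>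
        t.zero f b (b + 2))
      (fun (f : ((t.truncLT (b + 1)).obj X)⟦(1 : ℤ)⟧ ⟶ (t.truncGE (b + 1)).obj X) =>
        t.zero f (b - 1) (b + 1))

namespace BoundedTStructure

variable (t : BoundedTStructure C)

def toTStructure : Triangulated.TStructure C where
  le n X := X ∈ t.tle n
  ge n X := X ∈ t.tge n
  le_isClosedUnderIsomorphisms n := ⟨fun e hX => t.tle_iso n e hX⟩
  ge_isClosedUnderIsomorphisms n := ⟨fun e hX => t.tge_iso n e hX⟩
  le_shift n a n' h X hX := by simpa [← h] using (t.tle_shift n a X).1 hX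
  ge_shift n a n' h X hX := by simpa [← h] using (t.tge_shift n a X).1 hX
  zero' _ _ f hX hY := t.t_orth hX hY f
  le_zero_le := t.tle_mono 0
  ge_one_le := t.tge_anti 0
  exists_triangle_zero_one A := by
    obtain ⟨h, hT⟩ := t.τ_triangle 0 A
    exact ⟨_, _, t.τle_mem 0 A, t.τge_mem (0 + 1) A, _, _, h, hT⟩

lemma hom_eq_zero {a b : ℤ} (hab : a < b) {X Y : C} (hX : X ∈ t.tle a) (hY : Y ∈ t.tge b)
    (f : X ⟶ Y) : f = 0 :=
  t.toTStructure.zero_of_isLE_of_isGE f a b hab ⟨hX⟩ ⟨hY⟩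

end BoundedTStructure

namespace BoundedWeightStructure

variable (w : BoundedWeightStructure C)

lemma wle_monotone : Monotone w.wle := monotone_int_of_le_succ w.wle_mono

lemma wge_antitone : Antitone w.wge := antitone_int_of_succ_le w.wge_anti

lemma hom_eq_zero {a b : ℤ} (hab : a < b) {X Y : C} (hX : X ∈ w.wle a) (hY : Y ∈ w.wge b)
    (f : X ⟶ Y) : f = 0 := by
  have hX' : X⟦-a⟧ ∈ w.wle 0 := by simpa using (w.wle_shift a (-a) X).1 hX
  have hY' : Y⟦-a⟧ ∈ w.wge 1 :=
    w.wge_antitone (by omega : 1 ≤ b + -a) ((w.wge_shift b (-a) Y).1 hY)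
  exact (shiftFunctor C (-a)).map_injective
    (by rw [w.w_orth hX' hY' ((shiftFunctor C (-a)).map f), Functor.map_zero])

lemma mem_wle₂ {T : Triangle C} (hT : T ∈ distTriang C) {n : ℤ} (h₁ : T.obj₁ ∈ w.wle n)
    (h₃ : T.obj₃ ∈ w.wle n) : T.obj₂ ∈ w.wle n := by
  suffices h : ∀ T ∈ distTriang C, T.obj₁ ∈ w.wle 0 → T.obj₃ ∈ w.wle 0 → T.obj₂ ∈ w.wle 0 by
    have := h _ (Triangle.shift_distinguished T hT (-n))
      (by simpa using (w.wle_shift n (-n) _).1 h₁) (by simpa using (w.wle_shift n (-n) _).1 h₃)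
    exact (w.wle_shift n (-n) _).2 (by rw [add_neg_cancel]; exact this)
  intro T hT h₁ h₃
  -- `T.obj₂` is a summand of the `w ≤ 0` part of its weight decomposition
  obtain ⟨A, B, f, g, h, hAB, hA, hB⟩ := w.w_dec T.obj₂
  obtain ⟨γ, hγ⟩ := Triangle.yoneda_exact₂ T hT g (w.w_orth h₁ hB _)
  obtain ⟨s, hs⟩ := Triangle.coyoneda_exact₂ _ hAB (𝟙 T.obj₂)
    (show 𝟙 T.obj₂ ≫ g = 0 by rw [Category.id_comp, hγ, w.w_orth h₃ hB γ, comp_zero])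
  exact w.wle_summand 0 s f hs.symm hA

lemma mem_wge₂ {T : Triangle C} (hT : T ∈ distTriang C) {n : ℤ} (h₁ : T.obj₁ ∈ w.wge n)
    (h₃ : T.obj₃ ∈ w.wge n) : T.obj₂ ∈ w.wge n := by
  suffices h : ∀ T ∈ distTriang C, T.obj₁ ∈ w.wge 1 → T.obj₃ ∈ w.wge 1 → T.obj₂ ∈ w.wge 1 by
    have := h _ (Triangle.shift_distinguished T hT (1 - n))
      (by simpa using (w.wge_shift n (1 - n) _).1 h₁)
      (by simpa using (w.wge_shift n (1 - n) _).1 h₃)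
    exact (w.wge_shift n (1 - n) _).2 (by rw [add_sub_cancel]; exact this)
  intro T hT h₁ h₃
  obtain ⟨A, B, f, g, h, hAB, hA, hB⟩ := w.w_dec T.obj₂
  obtain ⟨α, hα⟩ := Triangle.coyoneda_exact₂ T hT f (w.w_orth hA h₃ _)
  obtain ⟨r, hr⟩ := Triangle.yoneda_exact₂ _ hAB (𝟙 T.obj₂)
    (show f ≫ 𝟙 T.obj₂ = 0 by rw [Category.comp_id, hα, w.w_orth hA h₁ α, zero_comp])
  exact w.wge_summand 1 g r hr.symm hB

end BoundedWeightStructure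

namespace TransversalPackage

variable [HasFiniteBiproducts C] (P : TransversalPackage C)

lemma idempotentsSplit_of_wEq_of_tEq {n m : ℤ} {M : C} (hw : M ∈ P.wle n ∧ M ∈ P.wge n)
    (ht : M ∈ P.tle m ∧ M ∈ P.tge m) : idempotentsSplit C M :=
  have := P.wt_abelian n m
  idempotentsSplit_of_isIdempotentComplete
    (fun X : C => (X ∈ P.wle n ∧ X ∈ P.wge n) ∧ (X ∈ P.tle m ∧ X ∈ P.tge m)) ⟨hw, ht⟩

lemma idempotentsSplit_of_tEq {m : ℤ} {M : C} (hM : M ∈ P.tle m ∧ M ∈ P.tge m) :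
    idempotentsSplit C M := by
  obtain ⟨a, b, ha, hb⟩ := P.w_bounded M
  suffices h : ∀ n ≤ max a b, ∀ M, M ∈ P.tle m ∧ M ∈ P.tge m → M ∈ P.wge n →
      M ∈ P.wle (max a b) → idempotentsSplit C M from
    h a (le_max_left a b) M hM ha (P.wle_monotone (le_max_right a b) hb)
  intro n hn
  induction n, hn using Int.leInductionDown with
  | base => exact fun M hMt hge hle => P.idempotentsSplit_of_wEq_of_tEq ⟨hle, hge⟩ hMt
  | pred n hn ih =>
    intro M hMt hge hle
    obtain ⟨A, B, hAt, hBt, f, g, δ, hT, hA, hB, -⟩ := P.t_weight_filtration m n M hMt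
    have hA' : A ∈ P.wge (n - 1) := P.mem_wge₂ (inv_rot_of_distTriang _ hT)
      (by simpa [← sub_eq_add_neg] using (P.wge_shift n (-1) B).1 hB) hge
    have hB' : B ∈ P.wle (max a b) := P.mem_wle₂ (rot_of_distTriang _ hT) hle
      (P.wle_monotone (by omega) ((P.wle_shift (n - 1) 1 A).1 hA))
    refine Triangle.idempotentsSplit_obj₂ hT (P.idempotentsSplit_of_wEq_of_tEq ⟨hA, hA'⟩ hAt)
      (ih B hBt hB hB') (fun f => P.toBoundedWeightStructure.hom_eq_zero (by omega) hA hB f)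
      (fun f => P.toBoundedTStructure.hom_eq_zero (by omega : m < m + 1) hAt.1 ?_ f)
      (fun f => P.toBoundedTStructure.hom_eq_zero (by omega : m - 1 < m) ?_ hBt.2 f)
    · simpa using (P.tge_shift m (-1) B).1 hBt.2
    · exact (P.tle_shift m 1 A).1 hAt.1

end TransversalPackage

end

/-- Corollary following Corollary 1.Ca: a triangulated category equipped with a bounded weight
structure and a bounded t-structure satisfying the transversality properties (a)–(d) is
pseudo-abelian: every idempotent endomorphism of every object splits. -/
theorem corollary_pseudoabelian (P : TransversalPackage C) :
    IsIdempotentComplete C := by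
  refine ⟨fun X p hp => ?_⟩
  obtain ⟨a, b, ha, hb⟩ := P.t_bounded X
  have : P.toTStructure.IsGE X a := ⟨ha⟩
  have : P.toTStructure.IsLE X b := ⟨hb⟩
  exact idempotentsSplit_of_isGE_of_isLE P.toTStructure
    (fun m M hle hge => P.idempotentsSplit_of_tEq ⟨hle.le, hge.ge⟩) a b X p hp

end Absolute
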